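/- arXiv:math/0404096 — 8 statements merged into one kernel-verified Lean document; each statement's English description precedes it below -/
import Mathlib

section
/- Let H be a group acting on a countable set Y. Then every H-orbit in Y is infinite if and only if for every finite subset Y' of Y there exists h in H with h(Y') ∩ Y' = ∅. -/
open MulAction Set Pointwise

/-- B. Neumann's lemma: for a group acting on a countable set, every orbit is
infinite iff every finite subset can be moved entirely off itself. -/
theorem stmt_0 {H Y : Type*} [Group H] [Countable Y] [MulAction H Y] :
    (∀ y : Y, (MulAction.orbit H y).Infinite) ↔
      ∀ Y' : Set Y, Y'.Finite → ∃ h : H, ((h • ·) '' Y') ∩ Y' = ∅ := by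
  classical
  constructor
  · intro hinf Y' hY'
    by_contra hne
    push_neg at hne
    have hmov : ∀ h : H, ∃ a ∈ Y', h • a ∈ Y' := by
      intro h
      obtain ⟨b, ⟨a, ha, rfl⟩, hb⟩ := hne h
      exact ⟨a, ha, hb⟩
    set s : Finset (Y × Y) :=
      (hY'.toFinset ×ˢ hY'.toFinset).filter (fun p => ∃ h : H, h • p.1 = p.2) with hs
    set g : Y × Y → H := fun p =>
      if hp : ∃ h : H, h • p.1 = p.2 then hp.choose else 1 with hg
    have hcov : ⋃ p ∈ s, (g p) • ((MulAction.stabilizer H p.1 : Subgroup H) : Set H)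
        = Set.univ := by
      ext h
      simp only [Set.mem_univ, iff_true, Set.mem_iUnion]
      obtain ⟨a, ha, hha⟩ := hmov h
      have hex : ∃ h' : H, h' • (a, h • a).1 = (a, h • a).2 := ⟨h, rfl⟩
      refine ⟨(a, h • a), ?_, ?_⟩
      · simp [hs, Finset.mem_filter, Finset.mem_product, hY'.mem_toFinset, ha, hha, hex]
      · have hgp : g (a, h • a) • a = h • a := by
          simpa [hg, hex] using hex.choose_spec
        rw [mem_leftCoset_iff]
        simp only [SetLike.mem_coe, MulAction.mem_stabilizer_iff, mul_smul, hgp]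
        rw [inv_smul_eq_iff, hgp]
    obtain ⟨p, hp, hfin⟩ := Subgroup.exists_finiteIndex_of_leftCoset_cover hcov
    haveI := hfin
    have : Finite (MulAction.orbit H p.1) :=
      Finite.of_equiv _ (MulAction.orbitEquivQuotientStabilizer H p.1).symm
    exact (hinf p.1) (Set.toFinite _)
  · intro hmove y
    intro hfin
    obtain ⟨h, hh⟩ := hmove (MulAction.orbit H y) hfin
    have : h • y ∈ ((h • ·) '' MulAction.orbit H y) ∩ MulAction.orbit H y :=
      ⟨⟨y, MulAction.mem_orbit_self y, rfl⟩, MulAction.mem_orbit y h⟩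
    rw [hh] at this
    exact this
end

section
/- Let G be a group acting on a countable set Y such that every orbit is infinite. Then for any finite subsets A, B of Y there exists h in G with h(A) ∩ B = ∅. -/
/-!
The elements of `G` sending a given point `a` to a given point `b` form either the empty set or
a left coset of the stabilizer of `a`. If no `g` moved `A` off `B`, the finitely many cosets
attached to pairs `(a, b) ∈ A × B` would cover `G`, so by B. H. Neumann's lemma one of the
stabilizers would have finite index, i.e. some `a ∈ A` would have a finite orbit.
-/

open scoped Pointwise

namespace MulAction

variable {G Y : Type*} [Group G] [MulAction G Y]

theorem finiteIndex_stabilizer_iff_finite_orbit (y : Y) :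
    (stabilizer G y).FiniteIndex ↔ (orbit G y).Finite := by
  rw [Subgroup.finiteIndex_iff_finite_quotient, ← Set.finite_coe_iff]
  exact (orbitEquivQuotientStabilizer G y).finite_iff.symm

theorem setOf_smul_eq_eq_smul_stabilizer {a b : Y} {g : G} (hg : g • a = b) :
    {k : G | k • a = b} = g • (stabilizer G a : Set G) := by
  ext k
  rw [Set.mem_smul_set_iff_inv_smul_mem, Set.mem_ofPred_eq, SetLike.mem_coe, mem_stabilizer_iff,
    smul_eq_mul, mul_smul, inv_smul_eq_iff, hg]

theorem exists_disjoint_smul_of_infinite_orbit {A B : Set Y} (hA : A.Finite) (hB : B.Finite)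
    (horb : ∀ a ∈ A, (orbit G a).Infinite) : ∃ g : G, Disjoint (g • A) B := by
  classical
  by_contra! hmeet
  choose! g hg using fun p : Y × Y ↦ (mem_orbit_iff.mp : p.2 ∈ orbit G p.1 → _)
  let s := (hA.toFinset ×ˢ hB.toFinset).filter fun p ↦ p.2 ∈ orbit G p.1
  have hcover : ⋃ p ∈ s, g p • (stabilizer G p.1 : Set G) = Set.univ := by
    refine Set.eq_univ_of_forall fun k ↦ ?_
    obtain ⟨_, ⟨a, ha, rfl⟩, hkb⟩ := Set.not_disjoint_iff.mp (hmeet k)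
    have hp : (a, k • a) ∈ s := by simp [s, ha, hkb, mem_orbit]
    refine Set.mem_biUnion hp ?_
    rw [← setOf_smul_eq_eq_smul_stabilizer (hg _ (mem_orbit a k))]
    rfl
  obtain ⟨p, hp, hfin⟩ := Subgroup.exists_finiteIndex_of_leftCoset_cover hcover
  simp only [s, Finset.mem_filter, Finset.mem_product, Set.Finite.mem_toFinset] at hp
  exact horb p.1 hp.1.1 ((finiteIndex_stabilizer_iff_finite_orbit p.1).mp hfin)

end MulAction

theorem stmt_1_general {G Y : Type*} [Group G] [MulAction G Y]
    (horb : ∀ y : Y, (MulAction.orbit G y).Infinite)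
    (A B : Set Y) (hA : A.Finite) (hB : B.Finite) :
    ∃ h : G, ((h • ·) '' A) ∩ B = ∅ := by
  obtain ⟨h, hAB⟩ := MulAction.exists_disjoint_smul_of_infinite_orbit hA hB fun a _ ↦ horb a
  exact ⟨h, by rwa [Set.image_smul, ← Set.disjoint_iff_inter_eq_empty]⟩

/-- If all orbits of a group action on a countable set are infinite, then any
finite set can be moved off any other finite set. -/
theorem stmt_1 {G Y : Type*} [Group G] [Countable Y] [MulAction G Y]
    (horb : ∀ y : Y, (MulAction.orbit G y).Infinite)
    (A B : Set Y) (hA : A.Finite) (hB : B.Finite) :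
    ∃ h : G, ((h • ·) '' A) ∩ B = ∅ :=
  stmt_1_general horb A B hA hB
end

section
/- Let T be a tree on vertex set X × Y, let y₀ ≠ y₁ in Y, let Y₀, Y₁ be disjoint subsets of Y with y₀ ∈ Y₀ and y₁ ∈ Y₁, and let x₁, x₂ ∈ X. Suppose the T-path from (x₁,y₀) to (x₂,y₀) is contained in X × Y₀ and the T-path from (x₁,y₁) to (x₂,y₁) is contained in X × Y₁. Then the first edge of the T-path from (x₁,y₀) to (x₁,y₁) whose endpoint leaves X × Y₀ also occurs on the T-path from (x₂,y₀) to (x₂,y₁). -/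
/-!
Since `T` is a tree, the edge `e = s(u, v)` with `u = r.getVert i`, `v = r.getVert (i + 1)` is a
bridge, so every walk from `u` to `v` crosses it. Such a walk is obtained by going back along `r`
from `u` to `(x₁, y₀)`, along `p` to `(x₂, y₀)`, along `w` to `(x₂, y₁)`, back along `q` to
`(x₁, y₁)`, and back along `r` to `v`. The first two pieces stay in `X × Y₀` while `v` does not,
the `q`-piece stays in `X × Y₁` while `u` does not, and the last piece avoids `u` because `r` is
a path; hence `e` lies on `w`.
-/

open SimpleGraph Walk

namespace SimpleGraph

variable {V : Type*} {G : SimpleGraph V}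

theorem IsBridge.mem_edges_of_notMem_edges {a b u v : V} (h : G.IsBridge s(u, v))
    (pa : G.Walk a u) (hpa : s(u, v) ∉ pa.edges) (pb : G.Walk v b) (hpb : s(u, v) ∉ pb.edges)
    (w : G.Walk a b) : s(u, v) ∈ w.edges := by
  have hcross := isBridge_iff_forall_walk_mem_edges.mp h
    (pa.reverse.append (w.append pb.reverse))
  simp only [edges_append, edges_reverse, List.mem_append, List.mem_reverse] at hcross
  tauto

namespace Walk

theorem exists_getVert_of_mem_support_take {u v x : V} (p : G.Walk u v) (n : ℕ)
    (hx : x ∈ (p.take n).support) : ∃ j ≤ n, p.getVert j = x := by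
  obtain ⟨m, rfl, -⟩ := mem_support_iff_exists_getVert.mp hx
  exact ⟨n ⊓ m, min_le_left n m, (take_getVert p n m).symm⟩

theorem IsPath.getVert_notMem_support_drop {u v : V} {p : G.Walk u v} (hp : p.IsPath)
    {i n : ℕ} (hin : i < n) (hn : n ≤ p.length) : p.getVert i ∉ (p.drop n).support := by
  intro hmem
  obtain ⟨m, hm, hm_le⟩ := mem_support_iff_exists_getVert.mp hmem
  rw [drop_getVert] at hm
  rw [drop_length] at hm_le
  have := hp.getVert_injOn (by simp only [Set.mem_ofPred_eq]; omega)
    (by simp only [Set.mem_ofPred_eq]; omega) hm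
  omega

end Walk

end SimpleGraph

theorem stmt_5_general {X Y : Type*} (T : SimpleGraph (X × Y)) (hT : T.IsTree)
    (y₀ y₁ : Y) (Y₀ Y₁ : Set Y) (hdisj : Disjoint Y₀ Y₁)
    (x₁ x₂ : X)
    (p : T.Walk (x₁, y₀) (x₂, y₀))
    (hpY : ∀ v ∈ p.support, v.2 ∈ Y₀)
    (q : T.Walk (x₁, y₁) (x₂, y₁))
    (hqY : ∀ v ∈ q.support, v.2 ∈ Y₁)
    (r : T.Walk (x₁, y₀) (x₁, y₁)) (hr : r.IsPath)
    (w : T.Walk (x₂, y₀) (x₂, y₁))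
    (i : ℕ) (hfirst : ∀ j ≤ i, (r.getVert j).2 ∈ Y₀)
    (hexit : (r.getVert (i + 1)).2 ∉ Y₀) :
    s(r.getVert i, r.getVert (i + 1)) ∈ w.edges := by
  have hlen : i < r.length := by
    by_contra! hle
    apply hexit
    rw [r.getVert_of_length_le (by omega : r.length ≤ i + 1), ← r.getVert_of_length_le hle]
    exact hfirst i le_rfl
  have hbridge : T.IsBridge s(r.getVert i, r.getVert (i + 1)) :=
    isAcyclic_iff_forall_adj_isBridge.mp hT.isAcyclic (r.adj_getVert_succ hlen)
  refine hbridge.mem_edges_of_notMem_edges (p.reverse.append (r.take i)) ?_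
    ((r.drop (i + 1)).append q) ?_ w
  · intro he
    rcases (mem_support_append_iff _ _).mp (snd_mem_support_of_mem_edges _ he) with hv | hv
    · exact hexit (hpY _ (by simpa using hv))
    · obtain ⟨j, hj, hvj⟩ := r.exists_getVert_of_mem_support_take i hv
      exact hexit (hvj ▸ hfirst j hj)
  · intro he
    rcases (mem_support_append_iff _ _).mp (fst_mem_support_of_mem_edges _ he) with hu | hu
    · exact hr.getVert_notMem_support_drop (Nat.lt_succ_self i) hlen hu
    · exact hdisj.notMem_of_mem_left (hfirst i le_rfl) (hqY _ hu)

/-- Edge-sharing lemma in a tree on `X × Y`: if the tree-path from `(x₁,y₀)` to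
`(x₂,y₀)` stays in `X × Y₀` and the tree-path from `(x₁,y₁)` to `(x₂,y₁)` stays
in `X × Y₁` (with `Y₀, Y₁` disjoint), then the first edge of the tree-path from
`(x₁,y₀)` to `(x₁,y₁)` leaving `X × Y₀` also occurs on the tree-path from
`(x₂,y₀)` to `(x₂,y₁)`. -/
theorem stmt_5 {X Y : Type*} (T : SimpleGraph (X × Y)) (hT : T.IsTree)
    (y₀ y₁ : Y) (hy : y₀ ≠ y₁) (Y₀ Y₁ : Set Y) (hdisj : Disjoint Y₀ Y₁)
    (hy₀ : y₀ ∈ Y₀) (hy₁ : y₁ ∈ Y₁) (x₁ x₂ : X)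
    (p : T.Walk (x₁, y₀) (x₂, y₀)) (hp : p.IsPath)
    (hpY : ∀ v ∈ p.support, v.2 ∈ Y₀)
    (q : T.Walk (x₁, y₁) (x₂, y₁)) (hq : q.IsPath)
    (hqY : ∀ v ∈ q.support, v.2 ∈ Y₁)
    (r : T.Walk (x₁, y₀) (x₁, y₁)) (hr : r.IsPath)
    (w : T.Walk (x₂, y₀) (x₂, y₁)) (hw : w.IsPath)
    (i : ℕ) (hfirst : ∀ j ≤ i, (r.getVert j).2 ∈ Y₀)
    (hexit : (r.getVert (i + 1)).2 ∉ Y₀) :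
    s(r.getVert i, r.getVert (i + 1)) ∈ w.edges :=
  stmt_5_general T hT y₀ y₁ Y₀ Y₁ hdisj x₁ x₂ p hpY q hqY r hr w i hfirst hexit
end

section
/- Let X be an infinite, locally finite connected graph with injective edge labels U : E → ℝ, and let F be the free minimal spanning forest (e ∈ F iff no path connects the endpoints of e using only edges with labels less than U(e)). Then every connected component of F is infinite. -/
/-!
Let `K` be the vertex set of a component of the forest, and suppose `K` is finite. Since `G` is
infinite and connected, some edge leaves `K`, and local finiteness leaves only finitely many
such edges; take one, `e`, of least label. Any path between the endpoints of `e` must itself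
leave `K`, so it uses an edge of label at least `U e`. Hence `e` belongs to the forest, which
contradicts `K` being a component.
-/

namespace SimpleGraph

variable {V : Type*} {G : SimpleGraph V}

def freeMinimalSpanningForest {α : Type*} [LT α] (G : SimpleGraph V) (U : Sym2 V → α) :
    SimpleGraph V :=
  fromRel fun a b => G.Adj a b ∧ ¬∃ w : G.Walk a b, ∀ e ∈ w.edges, U e < U s(a, b)

theorem finite_setOf_dart_fst_mem [G.LocallyFinite] {K : Set V} (hK : K.Finite) :
    {d : G.Dart | d.fst ∈ K}.Finite := by
  refine (hK.prod (hK.biUnion fun v _ => (G.neighborSet v).toFinite)).preimage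
    Dart.toProd_injective.injOn |>.subset ?_
  intro d hd
  exact ⟨hd, Set.mem_biUnion hd d.adj⟩

theorem Connected.exists_dart_fst_mem_snd_notMem (hG : G.Connected) {K : Set V} {v u : V}
    (hv : v ∈ K) (hu : u ∉ K) : ∃ d : G.Dart, d.fst ∈ K ∧ d.snd ∉ K := by
  obtain ⟨d, -, hd⟩ := (hG v u).some.exists_boundary_dart K hv hu
  exact ⟨d, hd⟩

theorem not_exists_walk_lt_of_forall_dart_le {α : Type*} [LinearOrder α] (U : Sym2 V → α)
    {K : Set V} {d : G.Dart} (hd : d.fst ∈ K ∧ d.snd ∉ K)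
    (hmin : ∀ d' : G.Dart, d'.fst ∈ K → d'.snd ∉ K → U d.edge ≤ U d'.edge) :
    ¬∃ w : G.Walk d.fst d.snd, ∀ e ∈ w.edges, U e < U d.edge := by
  rintro ⟨w, hw⟩
  obtain ⟨d', hd'w, hd'K, hd'u⟩ := w.exists_boundary_dart K hd.1 hd.2
  exact (hmin d' hd'K hd'u).not_gt (hw _ (List.mem_map_of_mem hd'w))

theorem Connected.exists_freeMinimalSpanningForest_adj_of_finite [G.LocallyFinite]
    (hG : G.Connected) {α : Type*} [LinearOrder α] (U : Sym2 V → α) {K : Set V}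
    (hK : K.Finite) {v u : V} (hv : v ∈ K) (hu : u ∉ K) :
    ∃ a ∈ K, ∃ b ∉ K, (G.freeMinimalSpanningForest U).Adj a b := by
  obtain ⟨d, hd, hmin⟩ := Set.exists_min_image {d : G.Dart | d.fst ∈ K ∧ d.snd ∉ K}
    (fun d => U d.edge) ((finite_setOf_dart_fst_mem hK).subset fun _ hd => hd.1)
    (hG.exists_dart_fst_mem_snd_notMem hv hu)
  refine ⟨d.fst, hd.1, d.snd, hd.2, ?_⟩
  rw [freeMinimalSpanningForest, fromRel_adj]
  exact ⟨d.fst_ne_snd, Or.inl ⟨d.adj,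
    not_exists_walk_lt_of_forall_dart_le U hd fun d' h₁ h₂ => hmin d' ⟨h₁, h₂⟩⟩⟩

end SimpleGraph

theorem stmt_8_general {V : Type*} [Infinite V] (G : SimpleGraph V) [G.LocallyFinite]
    (hG : G.Connected) (U : Sym2 V → ℝ) :
    ∀ c : (SimpleGraph.fromRel (fun a b =>
        G.Adj a b ∧ ¬∃ w : G.Walk a b, ∀ e ∈ w.edges, U e < U s(a, b))).ConnectedComponent,
      c.supp.Infinite := by
  intro c
  by_contra hc
  have hfin : c.supp.Finite := Set.not_infinite.mp hc
  obtain ⟨v, hv⟩ := c.nonempty_supp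
  obtain ⟨u, hu⟩ := hfin.infinite_compl.nonempty
  obtain ⟨a, ha, b, hb, hab⟩ := hG.exists_freeMinimalSpanningForest_adj_of_finite U hfin hv hu
  exact hb (c.mem_supp_of_adj_mem_supp ha hab)

/-- Every connected component of the free minimal spanning forest of an
infinite, locally finite, connected graph with distinct edge labels is
infinite. -/
theorem stmt_8 {V : Type*} [Infinite V] (G : SimpleGraph V) [G.LocallyFinite]
    (hG : G.Connected) (U : Sym2 V → ℝ) (hU : Set.InjOn U G.edgeSet) :
    ∀ c : (SimpleGraph.fromRel (fun a b =>
        G.Adj a b ∧ ¬∃ w : G.Walk a b, ∀ e ∈ w.edges, U e < U s(a, b))).ConnectedComponent,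
      c.supp.Infinite :=
  stmt_8_general G hG U
end

section
/- Let X be a connected graph and K a finite nonempty proper subset of its vertices. If U : E → ℝ is injective, then the edge e₀ of minimal label among edges with exactly one endpoint in K satisfies: there is no path between the endpoints of e₀ all of whose edges have labels less than U(e₀). Hence e₀ belongs to the free minimal spanning forest. -/
lemma exists_boundary_edge {V : Type*} {G : SimpleGraph V} {K : Set V} :
    ∀ {a b : V} (w : G.Walk a b), a ∈ K → b ∉ K →
      ∃ c d : V, G.Adj c d ∧ c ∈ K ∧ d ∉ K ∧ s(c, d) ∈ w.edges := by
  intro a b w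
  induction w with
  | nil => intro ha hb; exact absurd ha hb
  | cons h p ih =>
      intro ha hb
      rename_i u c _
      by_cases hc : c ∈ K
      · obtain ⟨x, y, hxy, hx, hy, he⟩ := ih hc hb
        exact ⟨x, y, hxy, hx, hy, by simp [he]⟩
      · exact ⟨u, c, h, ha, hc, by simp⟩

/-- The cheapest edge leaving a finite nonempty proper vertex set `K` belongs to
the free minimal spanning forest: no path joins its endpoints using only edges
of strictly smaller label. -/
theorem stmt_9 {V : Type*} (G : SimpleGraph V) [G.LocallyFinite]
    (hG : G.Connected) (U : Sym2 V → ℝ) (hU : Set.InjOn U G.edgeSet)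
    (K : Set V) (hKfin : K.Finite) (hKne : K.Nonempty) (hKprop : K ≠ Set.univ)
    (a b : V) (hab : G.Adj a b) (ha : a ∈ K) (hb : b ∉ K)
    (hmin : ∀ c d : V, G.Adj c d → c ∈ K → d ∉ K → U s(a, b) ≤ U s(c, d)) :
    ¬∃ w : G.Walk a b, ∀ e ∈ w.edges, U e < U s(a, b) := by
  rintro ⟨w, hw⟩
  obtain ⟨c, d, hcd, hc, hd, he⟩ := exists_boundary_edge w ha hb
  exact absurd (hw _ he) (not_lt.2 (hmin c d hcd hc hd))
end

section
/- Let G be a group acting on a countable set X with the property that for every pair x, z ∈ X there are, for each n, random equivalence relations Rₙ on X that are G-equivariant in distribution, have almost surely finite equivalence classes, and satisfy P[(x,z) ∈ Rₙ] → 1. Fix o ∈ X and define means Mₙ on ℓ^∞(X) by Mₙ(f) = E[ (1/|Cₙ(o)|) Σ_{x ∈ Cₙ(o)} f(x) ], where Cₙ(o) is the Rₙ-class of o. Then for every g ∈ G and f ∈ ℓ^∞(X), |Mₙ(L_g f) − Mₙ(f)| ≤ 2‖f‖_∞ · P[(o, g·o) ∉ Rₙ], where L_g f(x) = f(g·x).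 -/
open MeasureTheory
open scoped Classical

/-!
Translating by `g` maps the class of `o` under `ω` onto the class of `g • o` under `g • ω`, so by
invariance of `P` the first mean equals the average of `f` over the class of `g • o`. That class
is the class of `o` unless `(o, g • o) ∉ Rₙ`, and there the two averages differ by at most `2C`.
-/

/-- Junk value `0` when `s` is infinite, and also when `s` is empty since `x / 0 = 0`. -/
noncomputable def uniformAverage {X : Type*} (s : Set X) (f : X → ℝ) : ℝ :=
  if h : s.Finite then (∑ x ∈ h.toFinset, f x) / (h.toFinset.card : ℝ) else 0

section UniformAverage

variable {X Y : Type*}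

lemma abs_uniformAverage_le {s : Set X} {f : X → ℝ} {C : ℝ} (hC0 : 0 ≤ C)
    (hC : ∀ x ∈ s, |f x| ≤ C) : |uniformAverage s f| ≤ C := by
  unfold uniformAverage
  split_ifs with hs
  · rw [← Finset.expect_eq_sum_div_card]
    rcases hs.toFinset.eq_empty_or_nonempty with hempty | hne
    · simpa [hempty] using hC0
    · exact (Finset.abs_expect_le _ _).trans
        (Finset.expect_le hne fun x hx => hC x (hs.mem_toFinset.1 hx))
  · simpa using hC0

lemma uniformAverage_image {e : Y → X} (he : Function.Injective e) (s : Set Y) (f : X → ℝ) :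
    uniformAverage (e '' s) f = uniformAverage s (fun y => f (e y)) := by
  unfold uniformAverage
  by_cases hs : s.Finite
  · rw [dif_pos (hs.image e), dif_pos hs, Set.Finite.toFinset_image _ hs,
      Finset.sum_image he.injOn, Finset.card_image_of_injective _ he]
  · rw [dif_neg (by rwa [Set.finite_image_iff he.injOn]), dif_neg hs]

lemma measurable_uniformAverage [Countable X] (f : X → ℝ) :
    Measurable fun s : Set X => uniformAverage s f := by
  refine measurable_of_measurable_on_compl_countable _ Set.Countable.ofPred_finite ?_
  have hzero : {s : Set X | s.Finite}ᶜ.domRestrict (uniformAverage · f) = fun _ => 0 :=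
    funext fun s => dif_neg s.2
  rw [hzero]
  exact measurable_const

end UniformAverage

lemma MeasureTheory.MeasurePreserving.integral_comp_of_measurable {α β : Type*} [MeasurableSpace α]
    [MeasurableSpace β] {μ : Measure α} {ν : Measure β} {φ : α → β}
    (hφ : MeasurePreserving φ μ ν) {F : β → ℝ} (hF : Measurable F) :
    ∫ x, F (φ x) ∂μ = ∫ y, F y ∂ν := by
  rw [← hφ.map_eq, integral_map hφ.measurable.aemeasurable hF.aestronglyMeasurable]

lemma abs_integral_sub_le_of_eq_off {Ω : Type*} [MeasurableSpace Ω] {μ : Measure Ω}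
    [IsFiniteMeasure μ] {F H : Ω → ℝ} {A : Set Ω} {C : ℝ} (hF : Measurable F)
    (hH : Measurable H) (hFC : ∀ ω, |F ω| ≤ C) (hHC : ∀ ω, |H ω| ≤ C) (hA : MeasurableSet A)
    (hFH : ∀ ω ∉ A, F ω = H ω) :
    |∫ ω, F ω ∂μ - ∫ ω, H ω ∂μ| ≤ 2 * C * μ.real A := by
  have hFi : Integrable F μ := .of_bound hF.aestronglyMeasurable C (ae_of_all _ hFC)
  have hHi : Integrable H μ := .of_bound hH.aestronglyMeasurable C (ae_of_all _ hHC)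
  have hpt : ∀ ω, |F ω - H ω| ≤ A.indicator (fun _ => 2 * C) ω := by
    intro ω
    by_cases hω : ω ∈ A
    · rw [Set.indicator_of_mem hω, two_mul]
      exact (abs_sub _ _).trans (add_le_add (hFC ω) (hHC ω))
    · rw [Set.indicator_of_notMem hω, hFH ω hω, sub_self, abs_zero]
  rw [← integral_sub hFi hHi]
  calc |∫ ω, F ω - H ω ∂μ| ≤ ∫ ω, |F ω - H ω| ∂μ := abs_integral_le_integral_abs
    _ ≤ ∫ ω, A.indicator (fun _ => 2 * C) ω ∂μ :=
        integral_mono (hFi.sub hHi).abs ((integrable_const _).indicator hA) hpt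
    _ = 2 * C * μ.real A := by rw [integral_indicator_const _ hA, smul_eq_mul, mul_comm]

theorem stmt_10_general {G X : Type*} [Group G] [Countable X] [MulAction G X]
    {Ω : Type*} [MeasurableSpace Ω] (P : Measure Ω) [IsProbabilityMeasure P]
    [MulAction G Ω]
    (hmp : ∀ g : G, MeasurePreserving (fun ω => g • ω) P P)
    (R : ℕ → Ω → X → X → Prop)
    (hmeas : ∀ (n : ℕ) (x z : X), MeasurableSet {ω | R n ω x z})
    (heqv : ∀ (n : ℕ) (g : G) (ω : Ω) (x₁ x₂ : X),
      R n ω x₁ x₂ ↔ R n (g • ω) (g • x₁) (g • x₂))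
    (heq : ∀ (n : ℕ) (ω : Ω), Equivalence (R n ω))
    (o : X) (n : ℕ) (g : G) (f : X → ℝ) (C : ℝ) (hC : ∀ x, |f x| ≤ C) :
    |(∫ ω, (if h : {z | R n ω o z}.Finite then
          (∑ x ∈ h.toFinset, f (g • x)) / (h.toFinset.card : ℝ) else 0) ∂P) -
      (∫ ω, (if h : {z | R n ω o z}.Finite then
          (∑ x ∈ h.toFinset, f x) / (h.toFinset.card : ℝ) else 0) ∂P)| ≤
      2 * C * (P {ω | ¬ R n ω o (g • o)}).toReal := by
  have hC0 : 0 ≤ C := (abs_nonneg _).trans (hC o)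
  have haverage (x : X) : Measurable fun ω => uniformAverage {z | R n ω x z} f :=
    (measurable_uniformAverage f).comp
      (measurable_set_iff.2 fun z => measurableSet_setOfPred.1 (hmeas n x z))
  have hshift (ω : Ω) : {z | R n (g • ω) (g • o) z} = (g • ·) '' {z | R n ω o z} := by
    ext z
    rw [Set.image_smul, Set.mem_smul_set_iff_inv_smul_mem, Set.mem_ofPred_eq,
      Set.mem_ofPred_eq, heqv n g ω o, smul_inv_smul]
  have hsame (ω : Ω) (h : R n ω o (g • o)) : {z | R n ω o z} = {z | R n ω (g • o) z} :=
    Set.ext fun _ => ⟨(heq n ω).trans ((heq n ω).symm h), (heq n ω).trans h⟩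
  change |∫ ω, uniformAverage {z | R n ω o z} (fun x => f (g • x)) ∂P -
    ∫ ω, uniformAverage {z | R n ω o z} f ∂P| ≤ _
  simp_rw [← uniformAverage_image (MulAction.injective g), ← hshift]
  rw [(hmp g).integral_comp_of_measurable (haverage (g • o)), abs_sub_comm]
  exact abs_integral_sub_le_of_eq_off (haverage o) (haverage (g • o))
    (fun _ => abs_uniformAverage_le hC0 fun x _ => hC x)
    (fun _ => abs_uniformAverage_le hC0 fun x _ => hC x)
    (hmeas n o (g • o)).compl (fun ω hω => by rw [hsame ω (not_not.1 hω)])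

/-- The key estimate in the Adams–Lyons amenability criterion: with
`Mₙ f = E[|Cₙ(o)|⁻¹ ∑_{x ∈ Cₙ(o)} f(x)]`, one has
`|Mₙ(L_g f) − Mₙ(f)| ≤ 2‖f‖_∞ P[(o, g·o) ∉ Rₙ]`. -/
theorem stmt_10 {G X : Type*} [Group G] [Countable X] [MulAction G X]
    {Ω : Type*} [MeasurableSpace Ω] (P : Measure Ω) [IsProbabilityMeasure P]
    [MulAction G Ω]
    (hmp : ∀ g : G, MeasurePreserving (fun ω => g • ω) P P)
    (R : ℕ → Ω → X → X → Prop)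
    (hmeas : ∀ (n : ℕ) (x z : X), MeasurableSet {ω | R n ω x z})
    (heqv : ∀ (n : ℕ) (g : G) (ω : Ω) (x₁ x₂ : X),
      R n ω x₁ x₂ ↔ R n (g • ω) (g • x₁) (g • x₂))
    (heq : ∀ (n : ℕ) (ω : Ω), Equivalence (R n ω))
    (hfin : ∀ (n : ℕ) (x : X), ∀ᵐ ω ∂P, {z | R n ω x z}.Finite)
    (o : X) (n : ℕ) (g : G) (f : X → ℝ) (C : ℝ) (hC : ∀ x, |f x| ≤ C) :
    |(∫ ω, (if h : {z | R n ω o z}.Finite then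
          (∑ x ∈ h.toFinset, f (g • x)) / (h.toFinset.card : ℝ) else 0) ∂P) -
      (∫ ω, (if h : {z | R n ω o z}.Finite then
          (∑ x ∈ h.toFinset, f x) / (h.toFinset.card : ℝ) else 0) ∂P)| ≤
      2 * C * (P {ω | ¬ R n ω o (g • o)}).toReal :=
  stmt_10_general P hmp R hmeas heqv heq o n g f C hC
end

section
/- Let a locally compact group G act on a countable set X with compact stabilizers S_x = {g : g·x = x}. Then there exist finite sets B(x, ℓ) ⊆ X for x ∈ X, ℓ ≥ 1, such that: (a) g·B(x,ℓ) = B(g·x, ℓ) for all g ∈ G; (b) ⋃_{ℓ ≥ 1} B(x,ℓ) = X; and (c) for each x₁ ∈ X and ℓ ≥ 1, the set {x₂ ∈ X : B(x₁,ℓ) ∩ B(x₂,ℓ) ≠ ∅} is finite. -/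
/-!
Fix an enumeration `e` of `X` and put `B(x, ℓ) = {g • e k | g • e 0 = x, k ≤ ℓ}`; equivariance is
immediate and surjectivity of `e` gives exhaustion. Every transporter `{g | g • a = b}` is a
translate of the compact stabilizer of `a`, and orbit maps have open fibres, so the orbit of a
point under a transporter is finite. This makes each ball finite, and also each set
`{x | y ∈ B(x, ℓ)} = ⋃ k ≤ ℓ, {g • e 0 | g • e k = y}`, which gives the finite overlap.
-/

open Set Filter

theorem IsCompact.finite_image_of_isOpen_preimage_singleton {α β : Type*} [TopologicalSpace α]
    {f : α → β} (hf : ∀ b, IsOpen (f ⁻¹' {b})) {K : Set α} (hK : IsCompact K) :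
    (f '' K).Finite := by
  let _ : TopologicalSpace β := ⊥
  have : DiscreteTopology β := ⟨rfl⟩
  exact (hK.image (continuous_discrete_rng.2 hf)).finite_of_discrete

section Transporter

variable {G X : Type*} [Group G] [MulAction G X]

theorem image_mul_left_setOf_smul_eq (g : G) (a b : X) :
    (g * ·) '' {h : G | h • a = b} = {h : G | h • a = g • b} := by
  ext h
  simp [image_mul_left, mul_smul, inv_smul_eq_iff]

variable [TopologicalSpace G] [ContinuousMul G] [MulAction.IsPretransitive G X]

theorem isCompact_setOf_smul_eq {a : X} (ha : IsCompact {g : G | g • a = a}) (b : X) :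
    IsCompact {g : G | g • a = b} := by
  obtain ⟨g, rfl⟩ := MulAction.exists_smul_eq G a b
  rw [← image_mul_left_setOf_smul_eq]
  exact ha.image (continuous_const_mul g)

theorem finite_image_setOf_smul_eq (hopen : ∀ x z : X, IsOpen {g : G | g • x = z})
    (hstab : ∀ x : X, IsCompact {g : G | g • x = x}) (a b c : X) :
    ((· • a) '' {g : G | g • b = c}).Finite :=
  (isCompact_setOf_smul_eq (hstab b) c).finite_image_of_isOpen_preimage_singleton (hopen a)

end Transporter

section Ball

variable (G : Type*) {X : Type*} [Group G] [MulAction G X]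

def equivariantBall (x₀ : X) (e : ℕ → X) (x : X) (ℓ : ℕ) : Set X :=
  ⋃ k ≤ ℓ, (· • e k) '' {g : G | g • x₀ = x}

variable {G} {x₀ : X} {e : ℕ → X}

theorem image_smul_equivariantBall (g : G) (x : X) (ℓ : ℕ) :
    (g • ·) '' equivariantBall G x₀ e x ℓ = equivariantBall G x₀ e (g • x) ℓ := by
  simp only [equivariantBall, image_iUnion, image_image, ← image_mul_left_setOf_smul_eq,
    mul_smul]

theorem eventually_mem_equivariantBall [MulAction.IsPretransitive G X]
    (he : Function.Surjective e) (x y : X) : ∀ᶠ ℓ in atTop, y ∈ equivariantBall G x₀ e x ℓ := by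
  obtain ⟨g, rfl⟩ := MulAction.exists_smul_eq G x₀ x
  obtain ⟨k, hk⟩ := he (g⁻¹ • y)
  refine eventually_atTop.2 ⟨k, fun ℓ hℓ => mem_biUnion hℓ ⟨g, rfl, ?_⟩⟩
  simp [hk]

theorem setOf_mem_equivariantBall (y : X) (ℓ : ℕ) :
    {x | y ∈ equivariantBall G x₀ e x ℓ} = ⋃ k ≤ ℓ, (· • x₀) '' {g : G | g • e k = y} := by
  ext x
  simp [equivariantBall, and_comm]

section Finite

variable [TopologicalSpace G] [ContinuousMul G] [MulAction.IsPretransitive G X]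

theorem finite_equivariantBall (hopen : ∀ x z : X, IsOpen {g : G | g • x = z})
    (hstab : ∀ x : X, IsCompact {g : G | g • x = x}) (x : X) (ℓ : ℕ) :
    (equivariantBall G x₀ e x ℓ).Finite :=
  (finite_Iic ℓ).biUnion fun k _ => finite_image_setOf_smul_eq hopen hstab (e k) x₀ x

theorem finite_setOf_inter_equivariantBall_nonempty
    (hopen : ∀ x z : X, IsOpen {g : G | g • x = z})
    (hstab : ∀ x : X, IsCompact {g : G | g • x = x}) (x₁ : X) (ℓ : ℕ) :
    {x₂ | (equivariantBall G x₀ e x₁ ℓ ∩ equivariantBall G x₀ e x₂ ℓ).Nonempty}.Finite := by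
  have hcover : {x₂ | (equivariantBall G x₀ e x₁ ℓ ∩ equivariantBall G x₀ e x₂ ℓ).Nonempty} =
      ⋃ y ∈ equivariantBall G x₀ e x₁ ℓ, {x₂ | y ∈ equivariantBall G x₀ e x₂ ℓ} := by
    ext; simp [Set.Nonempty]
  rw [hcover]
  refine (finite_equivariantBall hopen hstab x₁ ℓ).biUnion fun y _ => ?_
  rw [setOf_mem_equivariantBall]
  exact (finite_Iic ℓ).biUnion fun k _ => finite_image_setOf_smul_eq hopen hstab x₀ (e k) y

end Finite

end Ball

theorem stmt_11_general {G X : Type*} [Group G] [TopologicalSpace G] [IsTopologicalGroup G]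
    [Countable X] [MulAction G X]
    [MulAction.IsPretransitive G X]
    (hopen : ∀ x z : X, IsOpen {g : G | g • x = z})
    (hstab : ∀ x : X, IsCompact {g : G | g • x = x}) :
    ∃ B : X → ℕ → Set X,
      (∀ (x : X) (ℓ : ℕ), 1 ≤ ℓ → (B x ℓ).Finite) ∧
      (∀ (g : G) (x : X) (ℓ : ℕ), 1 ≤ ℓ → (g • ·) '' B x ℓ = B (g • x) ℓ) ∧
      (∀ x : X, ⋃ ℓ ∈ {ℓ : ℕ | 1 ≤ ℓ}, B x ℓ = Set.univ) ∧
      (∀ (x₁ : X) (ℓ : ℕ), 1 ≤ ℓ →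
        {x₂ : X | (B x₁ ℓ ∩ B x₂ ℓ).Nonempty}.Finite) := by
  rcases isEmpty_or_nonempty X with _ | _
  · exact ⟨fun _ _ => ∅, fun _ _ _ => finite_empty, fun _ x => isEmptyElim x,
      fun x => isEmptyElim x, fun x => isEmptyElim x⟩
  obtain ⟨e, he⟩ := exists_surjective_nat X
  refine ⟨equivariantBall G (e 0) e, fun x ℓ _ => finite_equivariantBall hopen hstab x ℓ,
    fun g x ℓ _ => image_smul_equivariantBall g x ℓ, fun x => ?_,
    fun x₁ ℓ _ => finite_setOf_inter_equivariantBall_nonempty hopen hstab x₁ ℓ⟩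
  refine eq_univ_of_forall fun y => ?_
  obtain ⟨ℓ, hℓ, hy⟩ :=
    ((eventually_ge_atTop 1).and (eventually_mem_equivariantBall (G := G) he x y)).exists
  exact mem_biUnion hℓ hy

/-- Lemma 4.2: a locally compact group acting transitively and continuously on a
countable discrete set with compact stabilizers admits equivariant "balls"
`B(x,ℓ)` exhausting the set, with finite overlap. -/
theorem stmt_11 {G X : Type*} [Group G] [TopologicalSpace G] [IsTopologicalGroup G]
    [LocallyCompactSpace G] [Countable X] [MulAction G X]
    [MulAction.IsPretransitive G X]
    (hopen : ∀ x z : X, IsOpen {g : G | g • x = z})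
    (hstab : ∀ x : X, IsCompact {g : G | g • x = x}) :
    ∃ B : X → ℕ → Set X,
      (∀ (x : X) (ℓ : ℕ), 1 ≤ ℓ → (B x ℓ).Finite) ∧
      (∀ (g : G) (x : X) (ℓ : ℕ), 1 ≤ ℓ → (g • ·) '' B x ℓ = B (g • x) ℓ) ∧
      (∀ x : X, ⋃ ℓ ∈ {ℓ : ℕ | 1 ≤ ℓ}, B x ℓ = Set.univ) ∧
      (∀ (x₁ : X) (ℓ : ℕ), 1 ≤ ℓ →
        {x₂ : X | (B x₁ ℓ ∩ B x₂ ℓ).Nonempty}.Finite) :=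
  stmt_11_general hopen hstab
end

section
/- Let G be a countable group acting transitively on a countable set X with finite stabilizers, and suppose G acts by measure-preserving maps on a probability space (Ω, F, P). Suppose for each n there are G-equivariant random equivalence relations Rₙ on X with almost surely finite classes such that P[(x,z) ∈ Rₙ] → 1 for all x, z ∈ X. Then G is amenable. -/
open MeasureTheory

/-- A group is amenable if it carries a left-invariant finitely additive
probability measure defined on all subsets (equivalently, an invariant mean on
`ℓ^∞(G)`). -/
def IsAmenable (G : Type*) [Group G] : Prop :=
  ∃ m : Set G → ℝ,
    (∀ A : Set G, 0 ≤ m A) ∧ m Set.univ = 1 ∧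
    (∀ A B : Set G, Disjoint A B → m (A ∪ B) = m A + m B) ∧
    (∀ (g : G) (A : Set G), m ((g * ·) '' A) = m A)

open Filter Topology Set
open scoped Pointwise

/-!
Fix `x₀ : X`. For each `ω`, the elements `g` with `g • x₀` in the `Rₙ(ω)`-class of `x₀` form,
almost surely, a finite nonempty set `Tₙ(ω) ⊆ G` (stabilizers are finite), so
`μₙ(A) = 𝔼[|A ∩ Tₙ| / |Tₙ|]` is a finitely additive probability on `G`. By equivariance and
invariance of `P`, `μₙ(gA)` is the same expectation with the class of `g⁻¹x₀` in place of that
of `x₀`; the two classes agree unless `(g⁻¹x₀, x₀) ∉ Rₙ`, so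
`|μₙ(gA) - μₙ(A)| ≤ P[(g⁻¹x₀, x₀) ∉ Rₙ] → 0`. A limit of the `μₙ` along an ultrafilter is then
an invariant mean.
-/

theorem isAmenable_of_asymptotically_invariant {G ι : Type*} [Group G] {l : Filter ι} [l.NeBot]
    (μ : ι → Set G → ℝ) (hnonneg : ∀ i A, 0 ≤ μ i A) (huniv : ∀ i, μ i univ = 1)
    (hunion : ∀ i A B, Disjoint A B → μ i (A ∪ B) = μ i A + μ i B)
    (hinv : ∀ g A, Tendsto (fun i => μ i ((g * ·) '' A) - μ i A) l (𝓝 0)) :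
    IsAmenable G := by
  set U := Ultrafilter.of l
  have hle_one : ∀ i A, μ i A ≤ 1 := fun i A => by
    have := hunion i A Aᶜ disjoint_compl_right
    rw [union_compl_self, huniv] at this
    linarith [hnonneg i Aᶜ]
  have hlim : ∀ A, ∃ a, Tendsto (fun i => μ i A) U (𝓝 a) := fun A => by
    obtain ⟨a, -, ha⟩ := isCompact_Icc.ultrafilter_le_nhds (U.map fun i => μ i A) <| by
      rw [Ultrafilter.coe_map, le_principal_iff]
      exact mem_map.2 <| univ_mem' fun i => ⟨hnonneg i A, hle_one i A⟩
    exact ⟨a, ha⟩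
  choose m hm using hlim
  refine ⟨m, fun A => ge_of_tendsto' (hm A) (hnonneg · A), ?_, fun A B hAB => ?_, fun g A => ?_⟩
  · exact tendsto_nhds_unique (hm univ) (by simp only [huniv, tendsto_const_nhds])
  · exact tendsto_nhds_unique (hm _) (by simpa only [hunion _ A B hAB] using (hm A).add (hm B))
  · have := tendsto_nhds_unique ((hm _).sub (hm A)) ((hinv g A).mono_left (Ultrafilter.of_le l))
    linarith

namespace Set

variable {α : Type*}

-- `0` when `S` is infinite, as `Set.ncard` is.
noncomputable def relDensity (A S : Set α) : ℝ := ((A ∩ S).ncard : ℝ) / S.ncard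

theorem relDensity_nonneg (A S : Set α) : 0 ≤ A.relDensity S := by
  unfold relDensity; positivity

theorem relDensity_le_one (A S : Set α) : A.relDensity S ≤ 1 := by
  rcases S.finite_or_infinite with hS | hS
  · exact div_le_one_of_le₀ (mod_cast ncard_le_ncard inter_subset_right hS) (Nat.cast_nonneg _)
  · simp [relDensity, hS.ncard]

theorem relDensity_univ {S : Set α} (hS : S.Finite) (hne : S.Nonempty) :
    (univ : Set α).relDensity S = 1 := by
  rw [relDensity, univ_inter, div_self]
  exact_mod_cast ((ncard_pos hS).2 hne).ne'

theorem relDensity_union {A B : Set α} (hAB : Disjoint A B) (S : Set α) :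
    (A ∪ B).relDensity S = A.relDensity S + B.relDensity S := by
  rcases S.finite_or_infinite with hS | hS
  · rw [relDensity, union_inter_distrib_right,
      ncard_union_eq (hAB.mono inter_subset_left inter_subset_left) (hS.inter_of_right A)
        (hS.inter_of_right B), Nat.cast_add, add_div, relDensity, relDensity]
  · simp [relDensity, hS.ncard]

theorem relDensity_smul {G : Type*} [Group G] [MulAction G α] (g : G) (A S : Set α) :
    (g • A).relDensity (g • S) = A.relDensity S := by
  rw [relDensity, relDensity, ← smul_set_inter, ncard_smul_set, ncard_smul_set]

end Set

-- `Φ (T ω)` only depends on which of the countably many finite sets `T ω` is, if any.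
theorem measurable_comp_of_eq_zero_of_infinite {Ω α : Type*} [MeasurableSpace Ω] [Countable α]
    {T : Ω → Set α} (hT : ∀ a, MeasurableSet {ω | a ∈ T ω}) {Φ : Set α → ℝ}
    (hΦ : ∀ S : Set α, S.Infinite → Φ S = 0) : Measurable fun ω => Φ (T ω) := by
  have hfin : ∀ S : Finset α, MeasurableSet {ω | T ω = S} := fun S => by
    simp only [Set.ext_iff, ofPred_forall]
    refine MeasurableSet.iInter fun a => ?_
    by_cases ha : a ∈ S
    · simpa [ha] using hT a
    · simpa [ha] using (measurableSet_setOfPred.1 (hT a)).not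
  intro B _
  have hpre : (fun ω => Φ (T ω)) ⁻¹' B = (⋃ S : Finset α, {ω | T ω = S} ∩ {_ω | Φ S ∈ B}) ∪
      (⋃ S : Finset α, {ω | T ω = S})ᶜ ∩ {_ω | (0 : ℝ) ∈ B} := by
    ext ω
    rcases (T ω).finite_or_infinite with h | h
    · obtain ⟨S, hS⟩ : ∃ S : Finset α, T ω = S := ⟨h.toFinset, by simp⟩
      simp [hS]
    · have hne : ∀ S : Finset α, T ω ≠ S := fun S hS => h (hS ▸ S.finite_toSet)
      simp [hne, hΦ _ h]
  rw [hpre]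
  exact (MeasurableSet.iUnion fun S => (hfin S).inter (MeasurableSet.const _)).union
    ((MeasurableSet.iUnion hfin).compl.inter (MeasurableSet.const _))

theorem measurable_relDensity {Ω α : Type*} [MeasurableSpace Ω] [Countable α] {T : Ω → Set α}
    (hT : ∀ a, MeasurableSet {ω | a ∈ T ω}) (A : Set α) :
    Measurable fun ω => A.relDensity (T ω) :=
  measurable_comp_of_eq_zero_of_infinite hT fun S hS => by simp [relDensity, hS.ncard]

theorem MulAction.finite_setOf_smul_eq {G X : Type*} [Group G] [MulAction G X] {x : X}
    (hx : {g : G | g • x = x}.Finite) (y : X) : {g : G | g • x = y}.Finite := by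
  by_cases hy : ∃ g₀ : G, g₀ • x = y
  · obtain ⟨g₀, rfl⟩ := hy
    refine (hx.image (g₀ * ·)).subset fun g hg => ⟨g₀⁻¹ * g, ?_, by simp⟩
    simp only [mem_ofPred_eq, mul_smul] at hg ⊢
    rw [hg, inv_smul_smul]
  · push Not at hy
    simp [hy]

section OrbitClass

variable {G X : Type*} [Group G] [MulAction G X]

def orbitClass (r : X → X → Prop) (x₀ y : X) : Set G := {g | r y (g • x₀)}

variable {r : X → X → Prop} {x₀ : X}

theorem orbitClass_finite (hx₀ : {g : G | g • x₀ = x₀}.Finite) {y : X}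
    (hy : {z | r y z}.Finite) : (orbitClass r x₀ y : Set G).Finite :=
  hy.preimage' fun z _ => MulAction.finite_setOf_smul_eq hx₀ z

theorem smul_orbitClass {r' : X → X → Prop} (g : G)
    (hrr' : ∀ x₁ x₂, r x₁ x₂ ↔ r' (g • x₁) (g • x₂)) (y : X) :
    g • (orbitClass r x₀ y : Set G) = orbitClass r' x₀ (g • y) := by
  ext k
  rw [mem_smul_set_iff_inv_smul_mem, orbitClass, orbitClass, mem_ofPred_eq, mem_ofPred_eq, hrr',
    smul_smul, smul_eq_mul, mul_inv_cancel_left]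

theorem orbitClass_eq_of_rel (hr : Equivalence r) {y y' : X} (hyy' : r y y') :
    (orbitClass r x₀ y : Set G) = orbitClass r x₀ y' := by
  ext g
  exact ⟨hr.trans (hr.symm hyy'), hr.trans hyy'⟩

end OrbitClass

section ClassMean

variable {G X Ω : Type*} [Group G] [MulAction G X] [MeasurableSpace Ω] {P : Measure Ω}
  {r : Ω → X → X → Prop} {x₀ : X}

noncomputable def classMean (P : Measure Ω) (r : Ω → X → X → Prop) (x₀ y : X) (A : Set G) : ℝ :=
  ∫ ω, A.relDensity (orbitClass (r ω) x₀ y) ∂P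

theorem classMean_nonneg (y : X) (A : Set G) : 0 ≤ classMean P r x₀ y A :=
  integral_nonneg fun _ => relDensity_nonneg _ _

theorem classMean_univ [IsProbabilityMeasure P] (hx₀ : {g : G | g • x₀ = x₀}.Finite)
    (hrefl : ∀ ω, r ω x₀ x₀) (hfin : ∀ᵐ ω ∂P, {z | r ω x₀ z}.Finite) :
    classMean P r x₀ x₀ (univ : Set G) = 1 := by
  have hone : ∀ᵐ ω ∂P, (univ : Set G).relDensity (orbitClass (r ω) x₀ x₀) = 1 :=
    hfin.mono fun ω hω => relDensity_univ (orbitClass_finite hx₀ hω)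
      ⟨1, by simpa [orbitClass] using hrefl ω⟩
  rw [classMean, integral_congr_ae hone, integral_const, probReal_univ, smul_eq_mul, mul_one]

variable [Countable G]

theorem measurable_relDensity_orbitClass (hr : ∀ x z, MeasurableSet {ω | r ω x z}) (y : X)
    (A : Set G) : Measurable fun ω => A.relDensity (orbitClass (r ω) x₀ y) :=
  measurable_relDensity (fun g => hr y (g • x₀)) A

theorem integrable_relDensity_orbitClass [IsFiniteMeasure P]
    (hr : ∀ x z, MeasurableSet {ω | r ω x z}) (y : X) (A : Set G) :
    Integrable (fun ω => A.relDensity (orbitClass (r ω) x₀ y)) P :=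
  .of_bound (measurable_relDensity_orbitClass hr y A).aestronglyMeasurable 1 <|
    ae_of_all _ fun _ => by
      rw [Real.norm_eq_abs, abs_of_nonneg (relDensity_nonneg _ _)]
      exact relDensity_le_one _ _

theorem classMean_union [IsFiniteMeasure P] (hr : ∀ x z, MeasurableSet {ω | r ω x z})
    {A B : Set G} (hAB : Disjoint A B) (y : X) :
    classMean P r x₀ y (A ∪ B) = classMean P r x₀ y A + classMean P r x₀ y B := by
  simp only [classMean, relDensity_union hAB]
  exact integral_add (integrable_relDensity_orbitClass hr y A)
    (integrable_relDensity_orbitClass hr y B)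

theorem classMean_smul [MulAction G Ω] (hr : ∀ x z, MeasurableSet {ω | r ω x z})
    (hmp : ∀ g : G, MeasurePreserving (fun ω => g • ω) P P)
    (hequiv : ∀ (g : G) ω x₁ x₂, r ω x₁ x₂ ↔ r (g • ω) (g • x₁) (g • x₂)) (g : G) (y : X)
    (A : Set G) : classMean P r x₀ y (g • A) = classMean P r x₀ (g⁻¹ • y) A := by
  have hpt : ∀ ω, (g • A).relDensity (orbitClass (r ω) x₀ y) =
      A.relDensity (orbitClass (r (g⁻¹ • ω)) x₀ (g⁻¹ • y)) := fun ω => by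
    rw [← relDensity_smul g⁻¹, inv_smul_smul, smul_orbitClass g⁻¹ (hequiv g⁻¹ ω)]
  simp only [classMean, hpt]
  rw [← integral_map (hmp g⁻¹).measurable.aemeasurable
    (measurable_relDensity_orbitClass hr _ A).aestronglyMeasurable, (hmp g⁻¹).map_eq]

theorem abs_classMean_sub_le [IsFiniteMeasure P] (hr : ∀ x z, MeasurableSet {ω | r ω x z})
    (hequiv : ∀ ω, Equivalence (r ω)) (y y' : X) (A : Set G) :
    |classMean P r x₀ y A - classMean P r x₀ y' A| ≤ P.real {ω | r ω y y'}ᶜ := by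
  rw [classMean, classMean, ← Real.norm_eq_abs,
    ← integral_sub (integrable_relDensity_orbitClass hr y A)
      (integrable_relDensity_orbitClass hr y' A),
    ← integral_indicator_one (hr y y').compl]
  refine norm_integral_le_of_norm_le ((integrable_const (1 : ℝ)).indicator (hr y y').compl)
    (ae_of_all _ fun ω => ?_)
  by_cases h : r ω y y'
  · simp [orbitClass_eq_of_rel (hequiv ω) h, h]
  · rw [indicator_of_mem h, Pi.one_apply, Real.norm_eq_abs]
    exact abs_sub_le_of_nonneg_of_le (relDensity_nonneg _ _) (relDensity_le_one _ _)
      (relDensity_nonneg _ _) (relDensity_le_one _ _)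

theorem tendsto_classMean_smul_sub [IsProbabilityMeasure P] [MulAction G Ω]
    {ι : Type*} {l : Filter ι} {R : ι → Ω → X → X → Prop}
    (hR : ∀ i x z, MeasurableSet {ω | R i ω x z})
    (hmp : ∀ g : G, MeasurePreserving (fun ω => g • ω) P P)
    (hequiv : ∀ i (g : G) ω x₁ x₂, R i ω x₁ x₂ ↔ R i (g • ω) (g • x₁) (g • x₂))
    (heq : ∀ i ω, Equivalence (R i ω)) (g : G) (A : Set G)
    (hlim : Tendsto (fun i => P {ω | R i ω (g⁻¹ • x₀) x₀}) l (𝓝 1)) :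
    Tendsto (fun i => classMean P (R i) x₀ x₀ (g • A) - classMean P (R i) x₀ x₀ A) l (𝓝 0) := by
  have hcompl : Tendsto (fun i => P.real {ω | R i ω (g⁻¹ • x₀) x₀}ᶜ) l (𝓝 0) := by
    simp only [probReal_compl_eq_one_sub (hR _ _ _)]
    simpa [measureReal_def] using (tendsto_const_nhds (x := (1 : ℝ))).sub
      ((ENNReal.tendsto_toReal ENNReal.one_ne_top).comp hlim)
  refine squeeze_zero_norm (fun i => ?_) hcompl
  rw [classMean_smul (hR i) hmp (hequiv i), Real.norm_eq_abs]
  exact abs_classMean_sub_le (hR i) (heq i) _ _ A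

end ClassMean

theorem stmt_12_general {G X : Type*} [Group G] [Countable G] [Nonempty X]
    [MulAction G X]
    (hstab : ∀ x : X, {g : G | g • x = x}.Finite)
    {Ω : Type*} [MeasurableSpace Ω] (P : Measure Ω) [IsProbabilityMeasure P]
    [MulAction G Ω]
    (hmp : ∀ g : G, MeasurePreserving (fun ω => g • ω) P P)
    (R : ℕ → Ω → X → X → Prop)
    (hmeas : ∀ (n : ℕ) (x z : X), MeasurableSet {ω | R n ω x z})
    (heqv : ∀ (n : ℕ) (g : G) (ω : Ω) (x₁ x₂ : X),
      R n ω x₁ x₂ ↔ R n (g • ω) (g • x₁) (g • x₂))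
    (heq : ∀ (n : ℕ) (ω : Ω), Equivalence (R n ω))
    (hfin : ∀ (n : ℕ) (x : X), ∀ᵐ ω ∂P, {z | R n ω x z}.Finite)
    (hlim : ∀ x z : X,
      Filter.Tendsto (fun n => P {ω | R n ω x z}) Filter.atTop (nhds 1)) :
    IsAmenable G := by
  obtain ⟨x₀⟩ := ‹Nonempty X›
  refine isAmenable_of_asymptotically_invariant (l := atTop) (fun n A => classMean P (R n) x₀ x₀ A)
    (fun n A => classMean_nonneg x₀ A)
    (fun n => classMean_univ (hstab x₀) (fun ω => (heq n ω).refl x₀) (hfin n x₀))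
    (fun n _ _ hAB => classMean_union (hmeas n) hAB x₀) (fun g A => ?_)
  rw [show (g * ·) '' A = g • A from (image_smul : (g • ·) '' A = g • A)]
  exact tendsto_classMean_smul_sub hmeas hmp heqv heq g A (hlim _ _)

/-- Discrete case of Lemma 3.1 (Adams–Lyons criterion): a countable group acting
transitively with finite stabilizers on a countable set, admitting equivariant
random equivalence relations with a.s. finite classes and
`P[(x,z) ∈ Rₙ] → 1`, is amenable. -/
theorem stmt_12 {G X : Type*} [Group G] [Countable G] [Countable X] [Nonempty X]
    [MulAction G X] [MulAction.IsPretransitive G X]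
    (hstab : ∀ x : X, {g : G | g • x = x}.Finite)
    {Ω : Type*} [MeasurableSpace Ω] (P : Measure Ω) [IsProbabilityMeasure P]
    [MulAction G Ω]
    (hmp : ∀ g : G, MeasurePreserving (fun ω => g • ω) P P)
    (R : ℕ → Ω → X → X → Prop)
    (hmeas : ∀ (n : ℕ) (x z : X), MeasurableSet {ω | R n ω x z})
    (heqv : ∀ (n : ℕ) (g : G) (ω : Ω) (x₁ x₂ : X),
      R n ω x₁ x₂ ↔ R n (g • ω) (g • x₁) (g • x₂))
    (heq : ∀ (n : ℕ) (ω : Ω), Equivalence (R n ω))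
    (hfin : ∀ (n : ℕ) (x : X), ∀ᵐ ω ∂P, {z | R n ω x z}.Finite)
    (hlim : ∀ x z : X,
      Filter.Tendsto (fun n => P {ω | R n ω x z}) Filter.atTop (nhds 1)) :
    IsAmenable G :=
  stmt_12_general hstab P hmp R hmeas heqv heq hfin hlim
end
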